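/- Let f : [0,T] → ℝ be measurable with ∫₀ᵀ |f(u)|^{1/H} du < ∞, where 1/2 < H < 1. Then there exists a constant C₁ > 0 (depending only on H) such that ∫₀ᵀ∫₀ᵀ f(u) f(v) |u−v|^{2H−2} du dv ≤ C₁ (∫₀ᵀ |f(u)|^{1/H} du)^{2H}. -/

import Mathlib

/-!
Split `F` into the dyadic level sets `E j = {2 ^ j ≤ F < 2 ^ (j + 1)}`, of measures `m j`,
so that the double integral is at most `4 ∑ 2 ^ i 2 ^ j ∫_{E i} ∫_{E j} |u - v| ^ (2H - 2)`.
For any set `B`, `∫_B |u - v| ^ (2H - 2) dv ≤ c |B| ^ (2H - 1)`, the worst case being an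
interval centred at `u`. By symmetry it suffices to take `j = i + k` with `k ≥ 0`, and then
the term is at most
`c 2 ^ i 2 ^ (i + k) m i ^ (2H - 1) m (i + k) = c r ^ k b i ^ (2H - 1) b (i + k)`,
where `b j = 2 ^ (j / H) m j` and `r = 2 ^ (1 - 1/H) < 1`. As `∑ b j ≤ ∫ F ^ (1/H)`, the sum
over `i` is at most `(∫ F ^ (1/H)) ^ (2H)`, and the geometric series in `k` converges.
-/

open MeasureTheory Set Function
open scoped ENNReal NNReal

namespace ENNReal

lemma tsum_tsum_le_two_mul_tsum_tsum_add {w : ℤ → ℤ → ℝ≥0∞} (hw : ∀ i j, w i j = w j i) :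
    ∑' (i) (j), w i j ≤ 2 * ∑' (k : ℕ) (i), w i (i + k) := by
  set S : ℕ → ℝ≥0∞ := fun k => ∑' i, w i (i + k)
  have hneg (k : ℕ) : ∑' i, w i (i + -(k + 1 : ℤ)) = S (k + 1) := by
    rw [← (Equiv.addRight ((k + 1 : ℕ) : ℤ)).tsum_eq]
    refine tsum_congr fun i => ?_
    rw [hw]
    simp only [Equiv.coe_addRight]
    push_cast
    ring_nf
  calc ∑' (i) (j), w i j = ∑' (i) (d : ℤ), w i (i + d) :=
        tsum_congr fun i => ((Equiv.addLeft i).tsum_eq (w i)).symm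
    _ = ∑' (d : ℤ) (i), w i (i + d) := ENNReal.tsum_comm
    _ = ∑' k : ℕ, S k + ∑' k : ℕ, S (k + 1) := by
        rw [tsum_of_nat_of_neg_add_one ENNReal.summable ENNReal.summable]
        simp only [hneg, S]
    _ ≤ ∑' k : ℕ, S k + ∑' k : ℕ, S k :=
        add_le_add le_rfl (ENNReal.tsum_comp_le_tsum_of_injective (add_left_injective 1) S)
    _ = 2 * ∑' k : ℕ, S k := (two_mul _).symm

lemma tsum_rpow_mul_add_le {b : ℤ → ℝ≥0∞} {N : ℝ≥0∞} (hb : ∑' i, b i ≤ N) {θ : ℝ}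
    (hθ : 0 ≤ θ) (k : ℤ) : ∑' i, b i ^ θ * b (i + k) ≤ N ^ (θ + 1) := by
  calc ∑' i, b i ^ θ * b (i + k) ≤ ∑' i, N ^ θ * b (i + k) := by
        gcongr with i
        exact (ENNReal.le_tsum i).trans hb
    _ = N ^ θ * ∑' i, b i := by
        rw [ENNReal.tsum_mul_left]
        exact congrArg _ ((Equiv.addRight k).tsum_eq b)
    _ ≤ N ^ θ * N := by gcongr
    _ = N ^ (θ + 1) := by rw [ENNReal.rpow_add_of_nonneg _ _ hθ zero_le_one, ENNReal.rpow_one]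

lemma two_rpow_mul_two_rpow_mul_eq {H : ℝ} (hH : 0 < H) (hθ : 0 ≤ 2 * H - 1) (i j : ℝ)
    (x y : ℝ≥0∞) :
    2 ^ i * 2 ^ j * (x ^ (2 * H - 1) * y) = 2 ^ ((j - i) * (1 - 1 / H)) *
      ((2 ^ (i * (1 / H)) * x) ^ (2 * H - 1) * (2 ^ (j * (1 / H)) * y)) := by
  have h2 (a b : ℝ) : (2 : ℝ≥0∞) ^ (a + b) = 2 ^ a * 2 ^ b :=
    ENNReal.rpow_add a b two_ne_zero ENNReal.ofNat_ne_top
  rw [ENNReal.mul_rpow_of_nonneg _ _ hθ, ← ENNReal.rpow_mul]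
  calc 2 ^ i * 2 ^ j * (x ^ (2 * H - 1) * y)
      = 2 ^ ((j - i) * (1 - 1 / H) + i * (1 / H) * (2 * H - 1) + j * (1 / H)) *
          (x ^ (2 * H - 1) * y) := by
        rw [← h2]
        congr 2
        field_simp
        ring
    _ = _ := by
        rw [h2, h2]
        ring

lemma tsum_tsum_two_rpow_mul_le {H : ℝ} (hH : 1 / 2 ≤ H) {m : ℤ → ℝ≥0∞} {I : ℤ → ℤ → ℝ≥0∞}
    {C N : ℝ≥0∞} (hI_symm : ∀ i j, I i j = I j i) (hI : ∀ i j, I i j ≤ C * m j ^ (2 * H - 1) * m i)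
    (hm : ∑' j : ℤ, 2 ^ ((j : ℝ) * (1 / H)) * m j ≤ N) :
    ∑' (i : ℤ) (j : ℤ), 2 ^ (i : ℝ) * 2 ^ (j : ℝ) * I i j ≤
      2 * C * (1 - 2 ^ (1 - 1 / H))⁻¹ * N ^ (2 * H) := by
  have hH₀ : 0 < H := by linarith
  have hθ : 0 ≤ 2 * H - 1 := by linarith
  set r : ℝ≥0∞ := 2 ^ (1 - 1 / H)
  set b : ℤ → ℝ≥0∞ := fun j => 2 ^ ((j : ℝ) * (1 / H)) * m j
  set w : ℤ → ℤ → ℝ≥0∞ := fun i j => 2 ^ (i : ℝ) * 2 ^ (j : ℝ) * I i j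
  have hw (i : ℤ) (k : ℕ) : w i (i + k) ≤ C * (r ^ k * (b i ^ (2 * H - 1) * b (i + k))) :=
    calc w i (i + k)
        ≤ 2 ^ (i : ℝ) * 2 ^ ((i + k : ℤ) : ℝ) * (C * m i ^ (2 * H - 1) * m (i + k)) := by
          simp only [w]
          rw [hI_symm]
          gcongr
          exact hI _ _
      _ = C * (r ^ k * (b i ^ (2 * H - 1) * b (i + k))) := by
          rw [mul_assoc C, mul_left_comm, two_rpow_mul_two_rpow_mul_eq hH₀ hθ,
            ← ENNReal.rpow_natCast, ← ENNReal.rpow_mul]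
          simp only [b]
          push_cast
          ring_nf
  calc ∑' (i) (j), w i j ≤ 2 * ∑' (k : ℕ) (i), w i (i + k) :=
        tsum_tsum_le_two_mul_tsum_tsum_add fun i j => by
          simp only [w]
          rw [hI_symm, mul_comm (2 ^ (i : ℝ))]
    _ ≤ 2 * ∑' k : ℕ, C * (r ^ k * N ^ (2 * H)) := by
        gcongr with k
        calc ∑' i, w i (i + k) ≤ ∑' i, C * (r ^ k * (b i ^ (2 * H - 1) * b (i + k))) :=
              ENNReal.tsum_le_tsum fun i => hw i k
          _ = C * (r ^ k * ∑' i, b i ^ (2 * H - 1) * b (i + k)) := by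
              rw [ENNReal.tsum_mul_left, ENNReal.tsum_mul_left]
          _ ≤ C * (r ^ k * N ^ (2 * H)) := by
              gcongr
              simpa only [sub_add_cancel] using tsum_rpow_mul_add_le hm hθ k
    _ = 2 * C * (1 - r)⁻¹ * N ^ (2 * H) := by
        rw [ENNReal.tsum_mul_left, ENNReal.tsum_mul_right, ENNReal.tsum_geometric]
        ring

lemma exists_two_rpow_le_lt {y : ℝ≥0∞} (h₀ : y ≠ 0) (h_top : y ≠ ∞) :
    ∃ j : ℤ, 2 ^ (j : ℝ) ≤ y ∧ y < 2 ^ ((j : ℝ) + 1) := by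
  lift y to ℝ≥0 using h_top
  have hy : 0 < y := pos_iff_ne_zero.2 (by exact_mod_cast h₀)
  have hcast (k : ℤ) : (2 : ℝ≥0∞) ^ (k : ℝ) = ((2 : ℝ≥0) ^ k : ℝ≥0) := by
    rw [ENNReal.rpow_intCast, ENNReal.coe_zpow two_ne_zero, ENNReal.coe_ofNat]
  refine ⟨Int.log 2 y, ?_, ?_⟩
  · rw [hcast]
    exact_mod_cast Int.zpow_log_le_self (by norm_num) hy
  · rw [← Int.cast_one, ← Int.cast_add, hcast]
    exact_mod_cast Int.lt_zpow_succ_log_self (by norm_num) y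

end ENNReal

section LevelSets

variable {α : Type*} {F : α → ℝ≥0∞}

def dyadicLevelSet (F : α → ℝ≥0∞) (j : ℤ) : Set α :=
  F ⁻¹' Ico (2 ^ (j : ℝ)) (2 ^ ((j : ℝ) + 1))

lemma le_two_mul_of_mem_dyadicLevelSet {j : ℤ} {x : α} (hx : x ∈ dyadicLevelSet F j) :
    F x ≤ 2 * 2 ^ (j : ℝ) := by
  have h := hx.2.le
  rwa [ENNReal.rpow_add _ _ two_ne_zero ENNReal.ofNat_ne_top, ENNReal.rpow_one, mul_comm] at h

lemma pairwise_disjoint_dyadicLevelSet : Pairwise (Disjoint on dyadicLevelSet F) := by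
  intro i j hij
  wlog h : i < j generalizing i j
  · exact (this hij.symm (lt_of_le_of_ne (not_lt.1 h) hij.symm)).symm
  refine Set.disjoint_left.2 fun x hi hj => (hi.2.trans_le (le_trans ?_ hj.1)).false
  exact ENNReal.rpow_le_rpow_of_exponent_le one_le_two (by exact_mod_cast h)

lemma support_subset_iUnion_dyadicLevelSet (hF : ∀ x, F x ≠ ∞) :
    support F ⊆ ⋃ j, dyadicLevelSet F j := fun x hx =>
  mem_iUnion.2 (ENNReal.exists_two_rpow_le_lt hx (hF x))

variable [MeasurableSpace α] {μ : Measure α}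

lemma measurableSet_dyadicLevelSet (hF : Measurable F) (j : ℤ) :
    MeasurableSet (dyadicLevelSet F j) :=
  hF measurableSet_Ico

lemma tsum_two_rpow_mul_measure_dyadicLevelSet_le (hF : Measurable F) {p : ℝ} (hp : 0 ≤ p) :
    ∑' j : ℤ, 2 ^ ((j : ℝ) * p) * μ (dyadicLevelSet F j) ≤ ∫⁻ x, F x ^ p ∂μ := by
  calc ∑' j : ℤ, 2 ^ ((j : ℝ) * p) * μ (dyadicLevelSet F j)
      ≤ ∑' j : ℤ, ∫⁻ x in dyadicLevelSet F j, F x ^ p ∂μ := by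
        gcongr with j
        rw [← setLIntegral_const]
        refine setLIntegral_mono (hF.pow_const p) fun x hx => ?_
        rw [ENNReal.rpow_mul]
        exact ENNReal.rpow_le_rpow hx.1 hp
    _ = ∫⁻ x in ⋃ j, dyadicLevelSet F j, F x ^ p ∂μ :=
        (lintegral_iUnion (measurableSet_dyadicLevelSet hF) pairwise_disjoint_dyadicLevelSet _).symm
    _ ≤ ∫⁻ x, F x ^ p ∂μ := setLIntegral_le_lintegral _ _

lemma lintegral_eq_tsum_setLIntegral_dyadicLevelSet (hF : Measurable F) (hF_top : ∀ x, F x ≠ ∞)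
    {g : α → ℝ≥0∞} (hg : ∀ x, F x = 0 → g x = 0) :
    ∫⁻ x, g x ∂μ = ∑' j, ∫⁻ x in dyadicLevelSet F j, g x ∂μ := by
  rw [← lintegral_iUnion (measurableSet_dyadicLevelSet hF) pairwise_disjoint_dyadicLevelSet,
    setLIntegral_eq_of_support_subset]
  exact fun x hx => support_subset_iUnion_dyadicLevelSet hF_top fun h => hx (hg x h)

lemma lintegral_lintegral_mul_mul_le_tsum_dyadicLevelSet [SFinite μ] (hF : Measurable F)
    (hF_top : ∀ x, F x ≠ ∞) {K : α → α → ℝ≥0∞} (hK : Measurable (uncurry K)) :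
    ∫⁻ u, ∫⁻ v, F u * F v * K u v ∂μ ∂μ ≤ ∑' (i : ℤ) (j : ℤ), 4 * (2 ^ (i : ℝ) * 2 ^ (j : ℝ) *
      ∫⁻ u in dyadicLevelSet F i, ∫⁻ v in dyadicLevelSet F j, K u v ∂μ ∂μ) := by
  have hFFK : Measurable (uncurry fun u v => F u * F v * K u v) :=
    ((hF.comp measurable_fst).mul (hF.comp measurable_snd)).mul hK
  calc ∫⁻ u, ∫⁻ v, F u * F v * K u v ∂μ ∂μ
      = ∑' i, ∫⁻ u in dyadicLevelSet F i, ∑' j,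
          ∫⁻ v in dyadicLevelSet F j, F u * F v * K u v ∂μ ∂μ := by
        rw [lintegral_eq_tsum_setLIntegral_dyadicLevelSet hF hF_top fun u hu => by simp [hu]]
        refine tsum_congr fun i => lintegral_congr fun u => ?_
        exact lintegral_eq_tsum_setLIntegral_dyadicLevelSet hF hF_top fun v hv => by simp [hv]
    _ = ∑' (i) (j), ∫⁻ u in dyadicLevelSet F i,
          ∫⁻ v in dyadicLevelSet F j, F u * F v * K u v ∂μ ∂μ :=
        tsum_congr fun i => lintegral_tsum fun j => hFFK.lintegral_prod_right'.aemeasurable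
    _ ≤ ∑' (i) (j), ∫⁻ u in dyadicLevelSet F i, ∫⁻ v in dyadicLevelSet F j,
          2 * 2 ^ (i : ℝ) * (2 * 2 ^ (j : ℝ)) * K u v ∂μ ∂μ := by
        refine ENNReal.tsum_le_tsum fun i => ENNReal.tsum_le_tsum fun j => ?_
        refine setLIntegral_mono' (measurableSet_dyadicLevelSet hF i) fun u hu => ?_
        refine setLIntegral_mono' (measurableSet_dyadicLevelSet hF j) fun v hv => ?_
        gcongr
        exacts [le_two_mul_of_mem_dyadicLevelSet hu, le_two_mul_of_mem_dyadicLevelSet hv]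
    _ = _ := by
        refine tsum_congr fun i => tsum_congr fun j => ?_
        have hc : 2 * 2 ^ (i : ℝ) * (2 * 2 ^ (j : ℝ)) ≠ ∞ := by finiteness
        simp_rw [lintegral_const_mul' _ _ hc]
        ring

theorem lintegral_lintegral_mul_mul_le_of_setLIntegral_le [SFinite μ] {K : α → α → ℝ≥0∞}
    (hK : Measurable (uncurry K)) (hK_symm : ∀ u v, K u v = K v u) {H : ℝ} (hH : 1 / 2 ≤ H)
    {C : ℝ≥0∞} (hKC : ∀ u B, MeasurableSet B → ∫⁻ v in B, K u v ∂μ ≤ C * μ B ^ (2 * H - 1))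
    (hF : Measurable F) (hF_top : ∀ x, F x ≠ ∞) :
    ∫⁻ u, ∫⁻ v, F u * F v * K u v ∂μ ∂μ ≤
      8 * C * (1 - 2 ^ (1 - 1 / H))⁻¹ * (∫⁻ x, F x ^ (1 / H) ∂μ) ^ (2 * H) := by
  set E := dyadicLevelSet F
  set I : ℤ → ℤ → ℝ≥0∞ := fun i j => ∫⁻ u in E i, ∫⁻ v in E j, K u v ∂μ ∂μ
  have hI_symm (i j : ℤ) : I i j = I j i := by
    simp only [I]
    rw [lintegral_lintegral_swap hK.aemeasurable]
    simp_rw [hK_symm]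
  have hI (i j : ℤ) : I i j ≤ C * μ (E j) ^ (2 * H - 1) * μ (E i) :=
    calc I i j ≤ ∫⁻ _ in E i, C * μ (E j) ^ (2 * H - 1) ∂μ :=
          lintegral_mono fun u => hKC u _ (measurableSet_dyadicLevelSet hF j)
      _ = C * μ (E j) ^ (2 * H - 1) * μ (E i) := setLIntegral_const _ _
  calc ∫⁻ u, ∫⁻ v, F u * F v * K u v ∂μ ∂μ
      ≤ ∑' (i : ℤ) (j : ℤ), 4 * (2 ^ (i : ℝ) * 2 ^ (j : ℝ) * I i j) :=
        lintegral_lintegral_mul_mul_le_tsum_dyadicLevelSet hF hF_top hK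
    _ = 4 * ∑' (i : ℤ) (j : ℤ), 2 ^ (i : ℝ) * 2 ^ (j : ℝ) * I i j := by
        simp_rw [ENNReal.tsum_mul_left]
    _ ≤ 4 * (2 * C * (1 - 2 ^ (1 - 1 / H))⁻¹ * (∫⁻ x, F x ^ (1 / H) ∂μ) ^ (2 * H)) := by
        gcongr
        exact ENNReal.tsum_tsum_two_rpow_mul_le hH hI_symm hI
          (tsum_two_rpow_mul_measure_dyadicLevelSet_le hF (by positivity))
    _ = 8 * C * (1 - 2 ^ (1 - 1 / H))⁻¹ * (∫⁻ x, F x ^ (1 / H) ∂μ) ^ (2 * H) := by ring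

end LevelSets

lemma lintegral_Ioc_abs_rpow {a : ℝ} (ha : -1 < a) {s : ℝ} (hs : 0 ≤ s) :
    ∫⁻ x in Ioc 0 s, ENNReal.ofReal (|x| ^ a) = ENNReal.ofReal (s ^ (a + 1) / (a + 1)) := by
  rw [setLIntegral_congr_fun measurableSet_Ioc fun x hx => by rw [abs_of_pos hx.1],
    ← ofReal_integral_eq_lintegral_ofReal, ← intervalIntegral.integral_of_le hs,
    integral_rpow (Or.inl ha), Real.zero_rpow (by linarith), sub_zero]
  · exact (intervalIntegrable_iff_integrableOn_Ioc_of_le hs).1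
      (intervalIntegral.intervalIntegrable_rpow' ha)
  · exact (ae_restrict_iff' measurableSet_Ioc).2
      (ae_of_all _ fun x hx => Real.rpow_nonneg hx.1.le _)

lemma lintegral_Ico_abs_sub_rpow_le {a : ℝ} (ha : -1 < a) (u : ℝ) {s : ℝ} (hs : 0 ≤ s) :
    ∫⁻ v in Ico (u - s) (u + s), ENNReal.ofReal (|u - v| ^ a) ≤
      2 * ENNReal.ofReal (s ^ (a + 1) / (a + 1)) := by
  have hf : Measurable fun x : ℝ => ENNReal.ofReal (|x| ^ a) := by fun_prop
  have hleft : ∫⁻ v in Ico (u - s) u, ENNReal.ofReal (|u - v| ^ a) =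
      ENNReal.ofReal (s ^ (a + 1) / (a + 1)) := by
    rw [← lintegral_Ioc_abs_rpow ha hs, ← (Measure.measurePreserving_sub_left volume u)
      |>.setLIntegral_comp_preimage measurableSet_Ioc hf, preimage_const_sub_Ioc, sub_zero]
  have hright : ∫⁻ v in Ico u (u + s), ENNReal.ofReal (|u - v| ^ a) =
      ENNReal.ofReal (s ^ (a + 1) / (a + 1)) := by
    rw [← lintegral_Ioc_abs_rpow ha hs, ← setLIntegral_congr Ico_ae_eq_Ioc,
      ← (measurePreserving_sub_right volume u).setLIntegral_comp_preimage measurableSet_Ico hf,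
      preimage_sub_const_Ico, zero_add, add_comm s]
    simp_rw [abs_sub_comm]
  rw [← Ico_union_Ico_eq_Ico (by linarith : u - s ≤ u) (by linarith : u ≤ u + s), two_mul]
  exact (lintegral_union_le _ _ _).trans (add_le_add hleft.le hright.le)

lemma lintegral_abs_sub_rpow_le {μ : Measure ℝ} (hμ : μ ≤ volume) {a : ℝ} (ha : -1 < a)
    (ha₀ : a ≤ 0) (u : ℝ) :
    ∫⁻ v, ENNReal.ofReal (|u - v| ^ a) ∂μ ≤
      ENNReal.ofReal (1 + 2 / (a + 1)) * μ univ ^ (a + 1) := by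
  have ha₁ : 0 < a + 1 := by linarith
  rcases eq_or_ne (μ univ) ∞ with htop | htop
  · have hc : ENNReal.ofReal (1 + 2 / (a + 1)) ≠ 0 :=
      (ENNReal.ofReal_pos.2 (add_pos one_pos (div_pos two_pos ha₁))).ne'
    rw [htop, ENNReal.top_rpow_of_pos ha₁, ENNReal.mul_top hc]
    exact le_top
  rcases eq_or_ne (μ univ) 0 with h₀ | h₀
  · simp [Measure.measure_univ_eq_zero.1 h₀]
  set s := (μ univ).toReal
  have hs : 0 < s := ENNReal.toReal_pos h₀ htop
  have hfar : ∀ v ∈ (Ico (u - s) (u + s))ᶜ,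
      ENNReal.ofReal (|u - v| ^ a) ≤ ENNReal.ofReal (s ^ a) := by
    intro v hv
    refine ENNReal.ofReal_le_ofReal (Real.rpow_le_rpow_of_nonpos hs ?_ ha₀)
    rw [mem_compl_iff, mem_Ico] at hv
    contrapose! hv
    rw [abs_sub_lt_iff] at hv
    constructor <;> linarith
  calc ∫⁻ v, ENNReal.ofReal (|u - v| ^ a) ∂μ
      = ∫⁻ v in Ico (u - s) (u + s), ENNReal.ofReal (|u - v| ^ a) ∂μ +
          ∫⁻ v in (Ico (u - s) (u + s))ᶜ, ENNReal.ofReal (|u - v| ^ a) ∂μ :=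
        (lintegral_add_compl _ measurableSet_Ico).symm
    _ ≤ (∫⁻ v in Ico (u - s) (u + s), ENNReal.ofReal (|u - v| ^ a)) +
          ∫⁻ _ in (Ico (u - s) (u + s))ᶜ, ENNReal.ofReal (s ^ a) ∂μ :=
        add_le_add (lintegral_mono' (Measure.restrict_mono subset_rfl hμ) le_rfl)
          (setLIntegral_mono' measurableSet_Ico.compl hfar)
    _ ≤ 2 * ENNReal.ofReal (s ^ (a + 1) / (a + 1)) + ENNReal.ofReal (s ^ a) * μ univ := by
        rw [setLIntegral_const]
        gcongr
        exacts [lintegral_Ico_abs_sub_rpow_le ha u hs.le, subset_univ _]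
    _ = ENNReal.ofReal (1 + 2 / (a + 1)) * μ univ ^ (a + 1) := by
        rw [← ENNReal.ofReal_toReal htop, ENNReal.ofReal_rpow_of_nonneg hs.le ha₁.le,
          ← ENNReal.ofReal_ofNat 2, ← ENNReal.ofReal_mul zero_le_two,
          ← ENNReal.ofReal_mul (by positivity),
          ← ENNReal.ofReal_add (by positivity) (by positivity),
          ← ENNReal.ofReal_mul (by positivity), Real.rpow_add hs, Real.rpow_one]
        congr 1
        field_simp
        ring

noncomputable def hardyLittlewoodConst (H : ℝ) : ℝ≥0∞ :=
  8 * ENNReal.ofReal (1 + 2 / (2 * H - 1)) * (1 - 2 ^ (1 - 1 / H))⁻¹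

lemma hardyLittlewoodConst_ne_zero {H : ℝ} (hH : 1 / 2 < H) : hardyLittlewoodConst H ≠ 0 := by
  have : 0 < 2 * H - 1 := by linarith
  have hc : 0 < 1 + 2 / (2 * H - 1) := by positivity
  simp only [hardyLittlewoodConst, ne_eq, mul_eq_zero, ENNReal.inv_eq_zero, not_or]
  exact ⟨⟨by norm_num, (ENNReal.ofReal_pos.2 hc).ne'⟩, ENNReal.sub_ne_top ENNReal.one_ne_top⟩

lemma hardyLittlewoodConst_ne_top {H : ℝ} (hH₀ : 0 < H) (hH₁ : H < 1) :
    hardyLittlewoodConst H ≠ ∞ := by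
  have hr : (2 : ℝ≥0∞) ^ (1 - 1 / H) < 1 :=
    ENNReal.rpow_lt_one_of_one_lt_of_neg (by norm_num) (by rw [sub_neg, lt_div_iff₀ hH₀]; linarith)
  have : (1 - 2 ^ (1 - 1 / H) : ℝ≥0∞)⁻¹ ≠ ∞ := ENNReal.inv_ne_top.2 (tsub_pos_of_lt hr).ne'
  unfold hardyLittlewoodConst
  finiteness

theorem lintegral_lintegral_mul_mul_abs_sub_rpow_le {μ : Measure ℝ} [SFinite μ] (hμ : μ ≤ volume)
    {H : ℝ} (hH₁ : 1 / 2 < H) (hH₂ : H ≤ 1) {F : ℝ → ℝ≥0∞} (hF : Measurable F)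
    (hF_top : ∀ x, F x ≠ ∞) :
    ∫⁻ u, ∫⁻ v, F u * F v * ENNReal.ofReal (|u - v| ^ (2 * H - 2)) ∂μ ∂μ ≤
      hardyLittlewoodConst H * (∫⁻ x, F x ^ (1 / H) ∂μ) ^ (2 * H) := by
  refine lintegral_lintegral_mul_mul_le_of_setLIntegral_le (by fun_prop)
    (fun u v => by rw [abs_sub_comm]) hH₁.le (fun u B _ => ?_) hF hF_top
  have h := lintegral_abs_sub_rpow_le (μ := μ.restrict B) (Measure.restrict_le_self.trans hμ)
    (a := 2 * H - 2) (by linarith) (by linarith) u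
  rwa [Measure.restrict_apply_univ, show 2 * H - 2 + 1 = 2 * H - 1 by ring] at h

section RealIntegrals

variable {α β : Type*} [MeasurableSpace α] [MeasurableSpace β] {μ : Measure α}

lemma ofReal_integral_abs_rpow_eq_lintegral_enorm_rpow {f : α → ℝ} {p : ℝ} (hp : 0 ≤ p)
    (hf : Integrable (fun x => |f x| ^ p) μ) :
    ENNReal.ofReal (∫ x, |f x| ^ p ∂μ) = ∫⁻ x, ‖f x‖ₑ ^ p ∂μ := by
  rw [ofReal_integral_eq_lintegral_ofReal hf (ae_of_all _ fun x => by positivity)]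
  refine lintegral_congr fun x => ?_
  rw [Real.enorm_eq_ofReal_abs, ENNReal.ofReal_rpow_of_nonneg (abs_nonneg _) hp]

lemma integral_integral_le_toReal_lintegral_lintegral_enorm {ν : Measure β} {g : α → β → ℝ}
    (hg : ∫⁻ x, ∫⁻ y, ‖g x y‖ₑ ∂ν ∂μ ≠ ∞) :
    ∫ x, ∫ y, g x y ∂ν ∂μ ≤ (∫⁻ x, ∫⁻ y, ‖g x y‖ₑ ∂ν ∂μ).toReal := by
  refine (le_abs_self _).trans ?_
  rw [← Real.norm_eq_abs, ← toReal_enorm]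
  refine ENNReal.toReal_mono hg ((enorm_integral_le_lintegral_enorm _).trans ?_)
  exact lintegral_mono fun x => enorm_integral_le_lintegral_enorm _

end RealIntegrals

/-- Hardy–Littlewood-type estimate: for `H ∈ (1/2,1)` there is a constant
`C₁ > 0` depending only on `H` such that for every `T` and every measurable
`f : ℝ → ℝ` with `∫₀ᵀ |f(u)|^{1/H} du < ∞`,
`∫₀ᵀ∫₀ᵀ f(u) f(v) |u−v|^{2H−2} du dv ≤ C₁ (∫₀ᵀ |f(u)|^{1/H} du)^{2H}`. -/
theorem fractional_integral_hardy_littlewood (H : ℝ) (hH1 : 1 / 2 < H) (hH2 : H < 1) :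
    ∃ C₁ : ℝ, 0 < C₁ ∧ ∀ (T : ℝ) (f : ℝ → ℝ), Measurable f →
      IntegrableOn (fun u => |f u| ^ (1 / H)) (Set.Ioc 0 T) →
      (∫ u in Set.Ioc (0 : ℝ) T, ∫ v in Set.Ioc (0 : ℝ) T,
          f u * f v * |u - v| ^ (2 * H - 2)) ≤
        C₁ * (∫ u in Set.Ioc (0 : ℝ) T, |f u| ^ (1 / H)) ^ (2 * H) := by
  have hC := hardyLittlewoodConst_ne_top (by linarith) hH2
  refine ⟨(hardyLittlewoodConst H).toReal,
    ENNReal.toReal_pos (hardyLittlewoodConst_ne_zero hH1) hC, fun T f hf hfp => ?_⟩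
  set R := ∫ u in Ioc 0 T, |f u| ^ (1 / H)
  have henorm (u v : ℝ) : ‖f u * f v * |u - v| ^ (2 * H - 2)‖ₑ =
      ‖f u‖ₑ * ‖f v‖ₑ * ENNReal.ofReal (|u - v| ^ (2 * H - 2)) := by
    rw [enorm_mul, enorm_mul, Real.enorm_of_nonneg (Real.rpow_nonneg (abs_nonneg (u - v)) _)]
  have hmain : ∫⁻ u in Ioc 0 T, ∫⁻ v in Ioc 0 T, ‖f u * f v * |u - v| ^ (2 * H - 2)‖ₑ ≤
      hardyLittlewoodConst H * ENNReal.ofReal R ^ (2 * H) := by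
    simpa only [henorm, ← ofReal_integral_abs_rpow_eq_lintegral_enorm_rpow (by positivity) hfp]
      using lintegral_lintegral_mul_mul_abs_sub_rpow_le (μ := volume.restrict (Ioc 0 T))
        Measure.restrict_le_self hH1 hH2.le hf.enorm fun _ => enorm_ne_top
  have hfin : hardyLittlewoodConst H * ENNReal.ofReal R ^ (2 * H) ≠ ∞ := by finiteness
  calc (∫ u in Ioc (0 : ℝ) T, ∫ v in Ioc (0 : ℝ) T, f u * f v * |u - v| ^ (2 * H - 2))
      ≤ (∫⁻ u in Ioc 0 T, ∫⁻ v in Ioc 0 T, ‖f u * f v * |u - v| ^ (2 * H - 2)‖ₑ).toReal :=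
        integral_integral_le_toReal_lintegral_lintegral_enorm (hmain.trans_lt hfin.lt_top).ne
    _ ≤ (hardyLittlewoodConst H * ENNReal.ofReal R ^ (2 * H)).toReal :=
        ENNReal.toReal_mono hfin hmain
    _ = (hardyLittlewoodConst H).toReal * R ^ (2 * H) := by
        rw [ENNReal.toReal_mul, ← ENNReal.toReal_rpow,
          ENNReal.toReal_ofReal (integral_nonneg fun u => by positivity)]
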